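/- For every g ≥ 1, the first four entries of the first column of the g-th power of the 8×8 AGL₁ matrix M over Q(q) are (1, (q−1)^{2g} − 1, (q^{2g} − 1)/(q−1), ((q^{2g−2} − 1)((q−1)^{2g} − 1))/(q−1)). -/

import Mathlib

/-!
Let `v g` be the first column of `M ^ g`, so `v (g + 1) = M v g`. Rows 4 and 6 of `M` vanish off the
diagonal, so `v g 4 = v g 6 = 0`, and entries 0, 1, 2 satisfy scalar first-order recurrences.
Entries 3 and 7 are coupled through entry 5, whose closed form would need a division by
`q (q² - 2q + 2) - (q - 1)²`; but `q² (q - 1) v₃` and `q² ((q - 1) v₇ + v₅)` satisfy a closed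
recurrence in which `v₅` cancels. All these identities are polynomial in `q` and hold in any
commutative ring; `q` and `q - 1` are inverted only at the end.
-/

/-- The variable `q`, viewed in the field of rational functions `ℚ(q)`. -/
noncomputable def qr : RatFunc ℚ := RatFunc.X

/-- The 8×8 matrix of `Z'(holed torus)` for `AGL₁(k)`, over `ℚ(q)`. -/
noncomputable def M8 : Matrix (Fin 8) (Fin 8) (RatFunc ℚ) :=
  !![1, 0, 0, 0, 0, 0, 0, 0;
     qr * (qr - 2), (qr - 1) ^ 2, 0, 0, 0, 0, 0, 0;
     qr + 1, 0, qr ^ 2, 0, 0, 0, 0, 0;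
     0, qr ^ 2 - qr + 1, qr * (qr - 2), qr ^ 2 * (qr - 1), qr * (qr - 2), qr ^ 2 * (qr - 2),
       qr * (qr - 2) * (qr - 1), qr ^ 2 * (qr - 2) * (qr - 1);
     0, 0, 0, 0, qr ^ 2, 0, 0, 0;
     qr * (qr - 2), qr * (qr - 2), 0, 0, qr * (qr - 2) * (qr - 1),
       qr * (qr ^ 2 - 2 * qr + 2), 0, 0;
     0, 0, 0, 0, 0, 0, qr ^ 2, 0;
     0, qr * (qr - 2), qr * (qr - 2), qr ^ 2 * (qr - 2), 0, qr * (qr - 2) * (qr - 1),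
       qr * (qr - 2) * (qr - 1), qr ^ 2 * (qr ^ 2 - 3 * qr + 3)]

lemma Matrix.pow_succ_apply {n α : Type*} [Fintype n] [DecidableEq n] [Semiring α]
    (A : Matrix n n α) (g : ℕ) (i k : n) : (A ^ (g + 1)) i k = ∑ j, A i j * (A ^ g) j k := by
  rw [pow_succ', Matrix.mul_apply]

section
variable {R : Type*} [CommRing R]

def aglMatrix (q : R) : Matrix (Fin 8) (Fin 8) R :=
  !![1, 0, 0, 0, 0, 0, 0, 0;
     q * (q - 2), (q - 1) ^ 2, 0, 0, 0, 0, 0, 0;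
     q + 1, 0, q ^ 2, 0, 0, 0, 0, 0;
     0, q ^ 2 - q + 1, q * (q - 2), q ^ 2 * (q - 1), q * (q - 2), q ^ 2 * (q - 2),
       q * (q - 2) * (q - 1), q ^ 2 * (q - 2) * (q - 1);
     0, 0, 0, 0, q ^ 2, 0, 0, 0;
     q * (q - 2), q * (q - 2), 0, 0, q * (q - 2) * (q - 1),
       q * (q ^ 2 - 2 * q + 2), 0, 0;
     0, 0, 0, 0, 0, 0, q ^ 2, 0;
     0, q * (q - 2), q * (q - 2), q ^ 2 * (q - 2), 0, q * (q - 2) * (q - 1),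
       q * (q - 2) * (q - 1), q ^ 2 * (q ^ 2 - 3 * q + 3)]

variable (q : R)

lemma aglMatrix_pow_apply_zero_zero (g : ℕ) : (aglMatrix q ^ g) 0 0 = 1 := by
  induction g with
  | zero => simp
  | succ g ih =>
    rw [Matrix.pow_succ_apply]
    generalize aglMatrix q ^ g = P at ih
    simp [aglMatrix, Fin.sum_univ_eight, ih]

lemma aglMatrix_pow_apply_four_zero (g : ℕ) : (aglMatrix q ^ g) 4 0 = 0 := by
  induction g with
  | zero => simp
  | succ g ih =>
    rw [Matrix.pow_succ_apply]
    generalize aglMatrix q ^ g = P at ih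
    simp [aglMatrix, Fin.sum_univ_eight, ih]

lemma aglMatrix_pow_apply_six_zero (g : ℕ) : (aglMatrix q ^ g) 6 0 = 0 := by
  induction g with
  | zero => simp
  | succ g ih =>
    rw [Matrix.pow_succ_apply]
    generalize aglMatrix q ^ g = P at ih
    simp [aglMatrix, Fin.sum_univ_eight, ih]

lemma aglMatrix_pow_apply_one_zero (g : ℕ) : (aglMatrix q ^ g) 1 0 = (q - 1) ^ (2 * g) - 1 := by
  induction g with
  | zero => simp
  | succ g ih =>
    have h0 := aglMatrix_pow_apply_zero_zero q g
    rw [Matrix.pow_succ_apply]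
    generalize aglMatrix q ^ g = P at ih h0
    simp only [aglMatrix, Fin.sum_univ_eight, Matrix.of_apply, Matrix.cons_val', Matrix.cons_val,
      Matrix.cons_val_zero, Matrix.cons_val_one, Matrix.cons_val_fin_one]
    linear_combination (q - 1) ^ 2 * ih + q * (q - 2) * h0

lemma sub_one_mul_aglMatrix_pow_apply_two_zero (g : ℕ) :
    (q - 1) * (aglMatrix q ^ g) 2 0 = q ^ (2 * g) - 1 := by
  induction g with
  | zero => simp
  | succ g ih =>
    have h0 := aglMatrix_pow_apply_zero_zero q g
    rw [Matrix.pow_succ_apply]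
    generalize aglMatrix q ^ g = P at ih h0
    simp only [aglMatrix, Fin.sum_univ_eight, Matrix.of_apply, Matrix.cons_val', Matrix.cons_val,
      Matrix.cons_val_zero, Matrix.cons_val_one, Matrix.cons_val_fin_one]
    linear_combination q ^ 2 * ih + (q + 1) * (q - 1) * h0

lemma aglMatrix_pow_apply_three_seven_zero (g : ℕ) :
    q ^ 2 * (q - 1) * (aglMatrix q ^ g) 3 0 = (q ^ (2 * g) - q ^ 2) * ((q - 1) ^ (2 * g) - 1) ∧
    q ^ 2 * ((q - 1) * (aglMatrix q ^ g) 7 0 + (aglMatrix q ^ g) 5 0) =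
      q ^ (2 * g) * ((q - 1) ^ (2 * g) - 1) := by
  induction g with
  | zero => simp
  | succ g ih =>
    obtain ⟨h3, h7⟩ := ih
    have h0 := aglMatrix_pow_apply_zero_zero q g
    have h1 := aglMatrix_pow_apply_one_zero q g
    have h2 := sub_one_mul_aglMatrix_pow_apply_two_zero q g
    have h4 := aglMatrix_pow_apply_four_zero q g
    have h6 := aglMatrix_pow_apply_six_zero q g
    simp only [Matrix.pow_succ_apply]
    generalize aglMatrix q ^ g = P at h0 h1 h2 h3 h4 h6 h7
    simp only [aglMatrix, Fin.sum_univ_eight, Matrix.of_apply, Matrix.cons_val', Matrix.cons_val,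
      Matrix.cons_val_zero, Matrix.cons_val_one, Matrix.cons_val_fin_one]
    rw [h0, h1, h4, h6]
    constructor
    · linear_combination q ^ 3 * (q - 2) * h2 + q ^ 2 * (q - 1) * h3 + q ^ 2 * (q - 2) * (q - 1) * h7
    · linear_combination q ^ 3 * (q - 2) * h2 + q ^ 2 * (q - 2) * h3 + q ^ 2 * (q ^ 2 - 3 * q + 3) * h7
end

section
variable {K : Type*} [Field K] (q : K)

lemma aglMatrix_pow_apply_two_zero (hq1 : q - 1 ≠ 0) (g : ℕ) :
    (aglMatrix q ^ g) 2 0 = (q ^ (2 * g) - 1) / (q - 1) := by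
  rw [eq_div_iff hq1, mul_comm]
  exact sub_one_mul_aglMatrix_pow_apply_two_zero q g

lemma aglMatrix_pow_apply_three_zero (hq : q ≠ 0) (hq1 : q - 1 ≠ 0) (g : ℕ) :
    (aglMatrix q ^ g) 3 0 = ((q ^ (2 * g - 2) - 1) * ((q - 1) ^ (2 * g) - 1)) / (q - 1) := by
  cases g with
  | zero => simp
  | succ n =>
    rw [eq_div_iff hq1, show 2 * (n + 1) - 2 = 2 * n by omega]
    apply mul_left_cancel₀ (pow_ne_zero 2 hq)
    linear_combination (aglMatrix_pow_apply_three_seven_zero q (n + 1)).1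

end

open Polynomial in
lemma qr_sub_one_ne_zero : qr - 1 ≠ 0 := by
  rw [qr, ← RatFunc.algebraMap_X, ← map_one (algebraMap ℚ[X] (RatFunc ℚ)), ← map_sub]
  exact RatFunc.algebraMap_ne_zero (X_sub_C_ne_zero 1)

theorem stmt8_general (g : ℕ) :
    (M8 ^ g) 0 0 = 1 ∧
    (M8 ^ g) 1 0 = (qr - 1) ^ (2 * g) - 1 ∧
    (M8 ^ g) 2 0 = (qr ^ (2 * g) - 1) / (qr - 1) ∧
    (M8 ^ g) 3 0 = ((qr ^ (2 * g - 2) - 1) * ((qr - 1) ^ (2 * g) - 1)) / (qr - 1) := by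
  rw [show M8 = aglMatrix qr from rfl]
  exact ⟨aglMatrix_pow_apply_zero_zero qr g, aglMatrix_pow_apply_one_zero qr g,
    aglMatrix_pow_apply_two_zero qr qr_sub_one_ne_zero g,
    aglMatrix_pow_apply_three_zero qr RatFunc.X_ne_zero qr_sub_one_ne_zero g⟩

/-- The first four entries of the first column of `M8 ^ g`. -/
theorem stmt8 (g : ℕ) (hg : 1 ≤ g) :
    (M8 ^ g) 0 0 = 1 ∧
    (M8 ^ g) 1 0 = (qr - 1) ^ (2 * g) - 1 ∧
    (M8 ^ g) 2 0 = (qr ^ (2 * g) - 1) / (qr - 1) ∧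
    (M8 ^ g) 3 0 = ((qr ^ (2 * g - 2) - 1) * ((qr - 1) ^ (2 * g) - 1)) / (qr - 1) :=
  stmt8_general g
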